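/- Let S be a connected colorful graph and let e, e' ∈ E(S) be any two edges. Then there is a color-preserving isomorphism between the CFI graphs Γ(S, χ_e) and Γ(S, χ_{e'}). -/

import Mathlib

/-!
Adding an even assignment `t v` to the vertices of every color `v` (a gauge transformation)
is a color-preserving isomorphism `Γ(S, c) ≅ Γ(S, c + ∂t)`, where `∂t (uv) = t u (uv) + t v (uv)`.
With `t = χ_e + χ_g` at a common endpoint of the edges `e` and `g` (and `0` elsewhere) this moves
the charge `χ_e` to `χ_g`; repeating along a walk of the connected graph `S` moves it from any edge
to any other.
-/

open SimpleGraph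

variable {V : Type} [Fintype V] [DecidableEq V]

/-- Vertices of the CFI graph over a colorful graph `S`: pairs of a color `v ∈ V(S)`
and an even assignment on the edges incident to `v` (encoded as a function on all of
`Sym2 V` supported on the incidence set of `v`). -/
def CFIVert (S : SimpleGraph V) : Type :=
  Σ v : V, {a : Sym2 V → ZMod 2 //
    (∀ e, a e ≠ 0 → e ∈ S.incidenceSet v) ∧ ∑ e : Sym2 V, a e = 0}

/-- The CFI graph of a colorful graph `S` with charge function `c`: vertices
`(u, a_u)` and `(v, a_v)` are adjacent iff `uv ∈ E(S)` and
`a_u(uv) + a_v(uv) = c(uv)`.  Its coloring is `Sigma.fst : CFIVert S → V`. -/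
def CFI (S : SimpleGraph V) (c : Sym2 V → ZMod 2) : SimpleGraph (CFIVert S) where
  Adj x y := S.Adj x.1 y.1 ∧ x.2.1 s(x.1, y.1) + y.2.1 s(x.1, y.1) = c s(x.1, y.1)
  symm := ⟨by
    rintro ⟨u, a⟩ ⟨v, b⟩ ⟨hadj, hsum⟩
    refine ⟨hadj.symm, ?_⟩
    simp only [Sym2.eq_swap (a := v) (b := u)]
    rw [add_comm]; exact hsum⟩
  loopless := ⟨fun x h => S.loopless.1 _ h.1⟩

namespace CFI

variable (S : SimpleGraph V)

/-- The fibre of `CFIVert S` over `v`, as a group. -/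
def evenAssignments (v : V) : AddSubgroup (Sym2 V → ZMod 2) where
  carrier := {a | (∀ e, a e ≠ 0 → e ∈ S.incidenceSet v) ∧ ∑ e, a e = 0}
  zero_mem' := ⟨fun _ h => absurd rfl h, Finset.sum_const_zero⟩
  add_mem' := by
    rintro a b ⟨ha, ha'⟩ ⟨hb, hb'⟩
    refine ⟨fun e hab => ?_, by simp [Finset.sum_add_distrib, ha', hb']⟩
    by_cases hae : a e = 0
    · exact hb e (by simpa [hae] using hab)
    · exact ha e hae
  neg_mem' := by
    rintro a ⟨ha, ha'⟩
    exact ⟨fun e h => ha e (by simpa using h), by simp [ha']⟩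

def ColorIsomorphic (c c' : Sym2 V → ZMod 2) : Prop :=
  ∃ φ : CFI S c ≃g CFI S c', ∀ x : CFIVert S, (φ x).1 = x.1

variable {S}

omit [DecidableEq V] in
theorem ColorIsomorphic.trans {c c' c'' : Sym2 V → ZMod 2} (h : ColorIsomorphic S c c')
    (h' : ColorIsomorphic S c' c'') : ColorIsomorphic S c c'' :=
  let ⟨φ, hφ⟩ := h
  let ⟨ψ, hψ⟩ := h'
  ⟨φ.trans ψ, fun x => (hψ (φ x)).trans (hφ x)⟩

omit [DecidableEq V] in
theorem sum_apply_edge (t : ∀ v, evenAssignments S v) {u v : V} (huv : S.Adj u v) :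
    ∑ w, (t w : Sym2 V → ZMod 2) s(u, v) =
      (t u : Sym2 V → ZMod 2) s(u, v) + (t v : Sym2 V → ZMod 2) s(u, v) := by
  refine Finset.sum_eq_add u v huv.ne (fun w _ ⟨hwu, hwv⟩ => ?_) (by simp) (by simp)
  by_contra hw
  rcases Sym2.mem_iff.mp ((t w).2.1 _ hw).2 with h | h
  exacts [hwu h, hwv h]

omit [DecidableEq V] in
theorem colorIsomorphic_add_sum (c : Sym2 V → ZMod 2) (t : ∀ v, evenAssignments S v) :
    ColorIsomorphic S c (c + fun f => ∑ v, (t v : Sym2 V → ZMod 2) f) := by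
  refine ⟨⟨Equiv.sigmaCongrRight fun v => (Equiv.addRight (t v) : evenAssignments S v ≃ _), ?_⟩,
    fun _ => rfl⟩
  rintro ⟨u, a⟩ ⟨v, b⟩
  let f := s(u, v)
  change (S.Adj u v ∧ (a.1 f + (t u).1 f) + (b.1 f + (t v).1 f) = c f + ∑ w, (t w).1 f) ↔
    (S.Adj u v ∧ a.1 f + b.1 f = c f)
  refine and_congr_right fun huv => ?_
  rw [sum_apply_edge t huv, add_add_add_comm, add_left_inj]

theorem colorIsomorphic_add_of_mem (c : Sym2 V → ZMod 2) {b : V} {s : Sym2 V → ZMod 2}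
    (hs : s ∈ evenAssignments S b) : ColorIsomorphic S c (c + s) := by
  convert colorIsomorphic_add_sum c (Pi.single b ⟨s, hs⟩) using 2
  funext f
  rw [Finset.sum_eq_single b (fun v _ hvb => by simp [hvb]) (by simp)]
  simp

theorem indicator_add_indicator_mem {b : V} {e g : Sym2 V} (he : e ∈ S.incidenceSet b)
    (hg : g ∈ S.incidenceSet b) :
    (fun f => (if f = e then 1 else 0) + if f = g then 1 else 0 : Sym2 V → ZMod 2) ∈
      evenAssignments S b := by
  refine ⟨fun f hf => ?_, ?_⟩
  · by_cases hfe : f = e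
    · exact hfe ▸ he
    · by_cases hfg : f = g
      · exact hfg ▸ hg
      · simp [hfe, hfg] at hf
  · simp only [Finset.sum_add_distrib, Finset.sum_ite_eq', Finset.mem_univ, if_true]
    decide

theorem colorIsomorphic_indicator {b : V} {e g : Sym2 V} (he : e ∈ S.incidenceSet b)
    (hg : g ∈ S.incidenceSet b) :
    ColorIsomorphic S (fun f => if f = e then 1 else 0) (fun f => if f = g then 1 else 0) := by
  convert colorIsomorphic_add_of_mem _ (indicator_add_indicator_mem he hg) using 1
  funext f
  simp only [Pi.add_apply, ← add_assoc, CharTwo.add_self_eq_zero, zero_add]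

theorem colorIsomorphic_indicator_of_reachable {b b' : V} (hr : S.Reachable b b') {e e' : Sym2 V}
    (he : e ∈ S.incidenceSet b) (he' : e' ∈ S.incidenceSet b') :
    ColorIsomorphic S (fun f => if f = e then 1 else 0) (fun f => if f = e' then 1 else 0) := by
  obtain ⟨p⟩ := hr
  induction p generalizing e with
  | nil => exact colorIsomorphic_indicator he he'
  | cons h _ ih =>
    exact (colorIsomorphic_indicator he ⟨h, Sym2.mem_mk_left _ _⟩).trans
      (ih ⟨h, Sym2.mem_mk_right _ _⟩ he')

end CFI

theorem CFI_iso_push_charge_general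
    (S : SimpleGraph V) (hconn : S.Connected)
    (e e' : Sym2 V) (he : e ∈ S.edgeSet) (he' : e' ∈ S.edgeSet) :
    ∃ φ : CFI S (fun f => if f = e then 1 else 0) ≃g
        CFI S (fun f => if f = e' then 1 else 0),
      ∀ x : CFIVert S, (φ x).1 = x.1 :=
  CFI.colorIsomorphic_indicator_of_reachable (hconn.preconnected _ _) ⟨he, e.out_fst_mem⟩
    ⟨he', e'.out_fst_mem⟩

/-- For a connected colorful graph `S` and any two edges `e, e' ∈ E(S)`, the CFI
graphs `Γ(S, χ_e)` and `Γ(S, χ_{e'})` are color-isomorphic, via an isomorphism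
preserving the coloring `Sigma.fst`. -/
theorem CFI_iso_push_charge
    (S : SimpleGraph V) [DecidableRel S.Adj] (hconn : S.Connected)
    (e e' : Sym2 V) (he : e ∈ S.edgeSet) (he' : e' ∈ S.edgeSet) :
    ∃ φ : CFI S (fun f => if f = e then 1 else 0) ≃g
        CFI S (fun f => if f = e' then 1 else 0),
      ∀ x : CFIVert S, (φ x).1 = x.1 :=
  CFI_iso_push_charge_general S hconn e e' he he'
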